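/- arXiv:1408.6024 — 4 statements merged into one kernel-verified Lean document; each statement's English description precedes it below -/
import Mathlib

section
/- Let L > 0 and δ > 0. Define h(t) = g(t) + g(-t) on [-1,1], where g(t) = (1+t)·ln(1+t) − (1/L)·(L(1+t) + δ)·ln(L(1+t) + δ). Then h'(t) > 0 for all t ∈ (0,1), h is even, and h attains its minimum on [-1,1] at t = 0. -/
/-!
Writing `φ x = x log x`, we have `g t = φ (1 + t) - φ (L (1 + t) + δ) / L`, so
`g' t = k (1 + t)` with `k x = log x - log (L x + δ) = log (x / (L x + δ))`. The map
`x ↦ x / (L x + δ)` is strictly increasing on `(0, ∞)`, hence so is `k`, and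
`h' t = k (1 + t) - k (1 - t) > 0` for `0 < t < 1`. Since `h` is even and increasing on `[0, 1]`,
its minimum on `[-1, 1]` is `h 0`.
-/

open Real Set

noncomputable def mulLogDiff (L δ t : ℝ) : ℝ :=
  (1 + t) * log (1 + t) - (1 / L) * (L * (1 + t) + δ) * log (L * (1 + t) + δ)

lemma mulLogDiff_eq (L δ : ℝ) : mulLogDiff L δ = fun t =>
    (1 + t) * log (1 + t) - 1 / L * ((L * (1 + t) + δ) * log (L * (1 + t) + δ)) := by
  funext t; simp only [mulLogDiff]; ring

lemma continuous_mulLogDiff (L δ : ℝ) : Continuous (mulLogDiff L δ) := by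
  have hφ := continuous_mul_log
  rw [mulLogDiff_eq]
  exact (hφ.comp (by fun_prop)).sub (continuous_const.mul (hφ.comp (by fun_prop)))

lemma hasDerivAt_mulLogDiff {L δ t : ℝ} (hL : L ≠ 0) (ht : 1 + t ≠ 0)
    (hu : L * (1 + t) + δ ≠ 0) :
    HasDerivAt (mulLogDiff L δ) (log (1 + t) - log (L * (1 + t) + δ)) t := by
  have hv : HasDerivAt (fun s : ℝ => 1 + s) 1 t := (hasDerivAt_id' t).const_add 1
  have hu' : HasDerivAt (fun s : ℝ => L * (1 + s) + δ) L t :=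
    ((hv.const_mul L).add_const δ).congr_deriv (mul_one L)
  have h₁ : HasDerivAt (fun s : ℝ => (1 + s) * log (1 + s)) ((log (1 + t) + 1) * 1) t :=
    (hasDerivAt_mul_log ht).comp t hv
  have h₂ : HasDerivAt (fun s : ℝ => (L * (1 + s) + δ) * log (L * (1 + s) + δ))
      ((log (L * (1 + t) + δ) + 1) * L) t :=
    HasDerivAt.comp (h₂ := fun x => x * log x) t (hasDerivAt_mul_log hu) hu'
  rw [mulLogDiff_eq]
  refine (h₁.sub (h₂.const_mul (1 / L))).congr_deriv ?_
  field_simp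
  ring

lemma strictMonoOn_log_sub_log_mul_add {L δ : ℝ} (hL : 0 ≤ L) (hδ : 0 < δ) :
    StrictMonoOn (fun x => log x - log (L * x + δ)) (Ioi 0) := by
  intro x (hx : 0 < x) y (hy : 0 < y) hxy
  have hx' : 0 < L * x + δ := by positivity
  have hy' : 0 < L * y + δ := by positivity
  simp only [← log_div hx.ne' hx'.ne', ← log_div hy.ne' hy'.ne']
  refine log_lt_log (div_pos hx hx') ?_
  rw [div_lt_div_iff₀ hx' hy']
  nlinarith

lemma HasDerivAt.add_comp_neg {f : ℝ → ℝ} {f₁ f₂ t : ℝ} (h₁ : HasDerivAt f f₁ t)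
    (h₂ : HasDerivAt f f₂ (-t)) : HasDerivAt (fun x => f x + f (-x)) (f₁ - f₂) t := by
  have hneg : HasDerivAt (fun x : ℝ => -x) (-1) t := (hasDerivAt_id t).neg
  exact (h₁.add (h₂.comp t hneg)).congr_deriv (by ring)

lemma apply_zero_le_of_even_of_deriv_pos {f : ℝ → ℝ} {a : ℝ} (hcont : ContinuousOn f (Icc 0 a))
    (heven : ∀ t, f (-t) = f t) (hderiv : ∀ t ∈ Ioo 0 a, 0 < deriv f t) :
    ∀ t ∈ Icc (-a) a, f 0 ≤ f t := by
  have hmono : MonotoneOn f (Icc 0 a) :=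
    (strictMonoOn_of_deriv_pos (convex_Icc 0 a) hcont
      (by rwa [interior_Icc])).monotoneOn
  intro t ⟨hta, hat⟩
  have ha : (0 : ℝ) ∈ Icc 0 a := ⟨le_rfl, by linarith⟩
  rcases le_total 0 t with h0 | h0
  · exact hmono ha ⟨h0, hat⟩ h0
  · rw [← heven t]
    exact hmono ha ⟨by linarith, by linarith⟩ (by linarith)

theorem h_deriv_pos_even_min (L δ : ℝ) (hL : 0 < L) (hδ : 0 < δ) :
    let g : ℝ → ℝ := fun t =>
      (1 + t) * Real.log (1 + t) - (1 / L) * (L * (1 + t) + δ) * Real.log (L * (1 + t) + δ)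
    let h : ℝ → ℝ := fun t => g t + g (-t)
    (∀ t ∈ Set.Ioo (0:ℝ) 1, 0 < deriv h t) ∧
    (∀ t : ℝ, h (-t) = h t) ∧
    (∀ t ∈ Set.Icc (-1:ℝ) 1, h 0 ≤ h t) := by
  intro g h
  have heven : ∀ t, h (-t) = h t := fun t => by simp only [h, neg_neg]; ring
  have hderiv : ∀ t ∈ Ioo (0 : ℝ) 1, 0 < deriv h t := by
    intro t ⟨ht0, ht1⟩
    have hg' : ∀ s, 0 < 1 + s → HasDerivAt g (log (1 + s) - log (L * (1 + s) + δ)) s :=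
      fun s hs => hasDerivAt_mulLogDiff hL.ne' hs.ne' (by positivity)
    rw [((hg' t (by linarith)).add_comp_neg (hg' (-t) (by linarith))).deriv, sub_pos]
    exact strictMonoOn_log_sub_log_mul_add hL.le hδ (show 0 < 1 + -t by linarith)
      (show 0 < 1 + t by linarith) (by linarith)
  have hcont : Continuous h :=
    (continuous_mulLogDiff L δ).add ((continuous_mulLogDiff L δ).comp continuous_neg)
  exact ⟨hderiv, heven, apply_zero_le_of_even_of_deriv_pos hcont.continuousOn heven hderiv⟩
end

section
/- Let c > 1 and set a = (c² + 1)/(2c). For x ∈ [−1/a, 1/a], the distance from the point (x, 0) to the boundary ellipse {(u,v) : u²/a² + v²/(a²−1) = 1} equals √(a² − 1)·√(1 − x²). -/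
/-!
Write the ellipse as the confocal ellipse with foci `±1` and semi-major axis `a`, so that its
semi-minor axis squared is `a ^ 2 - 1`. For a boundary point `z`, eliminating `z.im` with the
equation of the ellipse and completing the square in `z.re` gives
`dist x z ^ 2 = (z.re / a - a * x) ^ 2 + (a ^ 2 - 1) * (1 - x ^ 2)`.
The square vanishes at `z.re = a ^ 2 * x`, which is the abscissa of a boundary point exactly
when `|x| ≤ 1 / a`.
-/

open Complex

def confocalEllipse (a : ℝ) : Set ℂ :=
  {z | z.re ^ 2 / a ^ 2 + z.im ^ 2 / (a ^ 2 - 1) = 1}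

section

variable {a : ℝ}

theorem im_sq_of_mem_confocalEllipse (ha : 1 < a) {z : ℂ} (hz : z ∈ confocalEllipse a) :
    z.im ^ 2 = (a ^ 2 - 1) * (1 - z.re ^ 2 / a ^ 2) := by
  have hb : a ^ 2 - 1 ≠ 0 := by nlinarith
  rw [confocalEllipse, Set.mem_ofPred_eq] at hz
  field_simp at hz ⊢
  linarith

theorem dist_ofReal_sq_of_mem_confocalEllipse (ha : 1 < a) (x : ℝ) {z : ℂ}
    (hz : z ∈ confocalEllipse a) :
    dist (x : ℂ) z ^ 2 = (z.re / a - a * x) ^ 2 + (a ^ 2 - 1) * (1 - x ^ 2) := by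
  have ha0 : a ≠ 0 := by positivity
  rw [dist_eq_re_im, Real.sq_sqrt (by positivity), ofReal_re, ofReal_im,
    sub_sq (0 : ℝ), im_sq_of_mem_confocalEllipse ha hz]
  field_simp
  ring

theorem mk_mem_confocalEllipse (ha : 1 < a) {u : ℝ} (hu : u ^ 2 ≤ a ^ 2) :
    (⟨u, √((a ^ 2 - 1) * (1 - u ^ 2 / a ^ 2))⟩ : ℂ) ∈ confocalEllipse a := by
  have ha2 : 0 < a ^ 2 := by positivity
  have hb : 0 < a ^ 2 - 1 := by nlinarith
  have hu' : 0 ≤ 1 - u ^ 2 / a ^ 2 := by rw [sub_nonneg, div_le_one ha2]; exact hu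
  rw [confocalEllipse, Set.mem_ofPred_eq, Real.sq_sqrt (mul_nonneg hb.le hu')]
  field_simp
  ring

theorem infDist_ofReal_confocalEllipse (ha : 1 < a) {x : ℝ} (hx : |x| ≤ 1 / a) :
    Metric.infDist (x : ℂ) (confocalEllipse a) = √((a ^ 2 - 1) * (1 - x ^ 2)) := by
  have ha0 : 0 < a := by positivity
  have hax : (a ^ 2 * x) ^ 2 ≤ a ^ 2 := by
    have : |a ^ 2 * x| ≤ |a| := by
      rw [abs_mul, abs_of_pos ha0, abs_of_pos (by positivity)]
      calc a ^ 2 * |x| ≤ a ^ 2 * (1 / a) := by gcongr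
        _ = a := by field_simp
    exact sq_le_sq.mpr this
  have hmem := mk_mem_confocalEllipse ha hax
  have hdist : ∀ z ∈ confocalEllipse a,
      (a ^ 2 - 1) * (1 - x ^ 2) ≤ dist (x : ℂ) z ^ 2 := fun z hz => by
    rw [dist_ofReal_sq_of_mem_confocalEllipse ha x hz]
    nlinarith [sq_nonneg (z.re / a - a * x)]
  refine le_antisymm ((Metric.infDist_le_dist_of_mem hmem).trans_eq ?_)
    ((Metric.le_infDist ⟨_, hmem⟩).mpr fun z hz =>
      (Real.sqrt_le_left dist_nonneg).mpr (hdist z hz))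
  have hre : a ^ 2 * x / a - a * x = 0 := by field_simp; ring
  rw [← Real.sqrt_sq dist_nonneg, dist_ofReal_sq_of_mem_confocalEllipse ha x hmem, hre]
  ring_nf

end

theorem one_lt_sq_add_one_div_two_mul {c : ℝ} (hc : 1 < c) : 1 < (c ^ 2 + 1) / (2 * c) := by
  rw [one_lt_div (by positivity)]
  nlinarith

theorem dist_to_ellipse_boundary (c : ℝ) (hc : 1 < c) (x : ℝ)
    (hx : x ∈ Set.Icc (-(1 / ((c ^ 2 + 1) / (2 * c)))) (1 / ((c ^ 2 + 1) / (2 * c)))) :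
    let a := (c ^ 2 + 1) / (2 * c)
    Metric.infDist (x : ℂ)
        {z : ℂ | z.re ^ 2 / a ^ 2 + z.im ^ 2 / (a ^ 2 - 1) = 1}
      = Real.sqrt (a ^ 2 - 1) * Real.sqrt (1 - x ^ 2) := by
  intro a
  have ha : 1 < a := one_lt_sq_add_one_div_two_mul hc
  have hb : 0 ≤ a ^ 2 - 1 := by nlinarith
  rw [← Real.sqrt_mul hb]
  exact infDist_ofReal_confocalEllipse ha (abs_le.mpr hx)
end

section
/- Let N be a positive integer and δ > 0. Let x₁,…,xₙ ∈ [−1,1] with n ≤ N and positive integers k₁,…,kₙ with k₁+…+kₙ = N, and set r_j = r(k_j) (least even integer ≥ k_j), so ∑ r_j ≤ 2N. Then, with L = 1/2, ∫_{−1}^{1} ∏_{j=1}^{n} (L|x − x_j|/(δ + L|x − x_j|))^{r_j} dx ≥ 2·((1 + 1/(2δ))^{2δ}·(2δ + 1))^{−2N}. -/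
open intervalIntegral

/-- The least even integer that is greater than or equal to `k`. -/
def leastEven (k : ℕ) : ℕ := 2 * ((k + 1) / 2)

/-!
Off the finitely many points `x j`, each factor equals `exp (r_j * ψ (t - x j))` with
`ψ = logRatio (2δ)`, i.e. `ψ u = log |u| - log (2δ + |u|)`. Jensen's inequality for `exp` and
the uniform measure on `[-1, 1]` bounds the integral below by `2 exp (½ ∑ r_j ∫ ψ (t - x j) dt)`.
As `ψ` is even and increasing in `|u|`, the window integral `∫_{-1}^{1} ψ (t - a) dt` is smallest
at `a = 0`, where it equals `2 (2δ log 2δ - (2δ + 1) log (2δ + 1)) ≤ 0`; together with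
`∑ r_j ≤ 2N` this gives the bound.
-/

open Real MeasureTheory Set

section EvenMonotone

variable {f : ℝ → ℝ}

theorem integral_sub_le_integral_add_of_monotoneOn (hf : MonotoneOn f (Ioi 0))
    (hfi : ∀ a b, IntervalIntegrable f volume a b) {p a : ℝ} (ha : 0 ≤ a) (hap : a ≤ p) :
    ∫ u in p - a..p, f u ≤ ∫ u in p..p + a, f u := by
  calc ∫ u in p - a..p, f u = ∫ u in p..p + a, f (u - a) := by
        rw [integral_comp_sub_right f, add_sub_cancel_right]
    _ ≤ ∫ u in p..p + a, f u :=
        integral_mono_on_of_le_Ioo (by linarith)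
          (by simpa using (hfi (p - a) p).comp_sub_right a) (hfi _ _)
          fun u hu => hf (mem_Ioi.2 (by linarith [hu.1])) (mem_Ioi.2 (by linarith [hu.1]))
            (by linarith)

theorem integral_comp_sub_neg_eq_of_even (heven : Function.Even f) (R a : ℝ) :
    ∫ t in -R..R, f (t - -a) = ∫ t in -R..R, f (t - a) := by
  rw [← neg_neg R, ← integral_comp_neg]
  simp only [neg_neg]
  congr 1 with t
  rw [← heven]
  ring_nf

theorem integral_le_integral_comp_sub_of_even (heven : Function.Even f)
    (hf : MonotoneOn f (Ioi 0)) (hfi : ∀ a b, IntervalIntegrable f volume a b) {R a : ℝ}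
    (ha : |a| ≤ R) :
    ∫ t in -R..R, f t ≤ ∫ t in -R..R, f (t - a) := by
  wlog ha0 : 0 ≤ a generalizing a
  · rw [← integral_comp_sub_neg_eq_of_even heven]
    exact this (by rwa [abs_neg]) (by linarith)
  have hleft : ∫ u in -R - a..-R, f u = ∫ u in R..R + a, f u := by
    rw [← neg_neg (-R - a), ← integral_comp_neg]
    simp only [heven _, neg_sub, sub_neg_eq_add, add_comm a]
  have hsplit : (∫ t in -R..R, f (t - a)) + ∫ u in R - a..R, f u
      = (∫ u in -R - a..-R, f u) + ∫ t in -R..R, f t := by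
    rw [intervalIntegral.integral_comp_sub_right f,
      integral_add_adjacent_intervals (hfi _ _) (hfi _ _),
      integral_add_adjacent_intervals (hfi _ _) (hfi _ _)]
  linarith [integral_sub_le_integral_add_of_monotoneOn hf hfi ha0 ((le_abs_self a).trans ha)]

theorem integral_symm_eq_two_mul_of_even (heven : Function.Even f)
    (hfi : ∀ a b, IntervalIntegrable f volume a b) (R : ℝ) :
    ∫ t in -R..R, f t = 2 * ∫ u in (0 : ℝ)..R, f u := by
  have hleft : ∫ t in -R..0, f t = ∫ u in (0 : ℝ)..R, f u := by
    rw [← neg_zero, ← integral_comp_neg]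
    simp only [heven _, neg_zero]
  rw [← integral_add_adjacent_intervals (hfi (-R) 0) (hfi 0 R), hleft]
  ring

end EvenMonotone

theorem mul_exp_average_le_integral_exp {a b : ℝ} (hab : a < b) {H : ℝ → ℝ}
    (hH : IntervalIntegrable H volume a b)
    (hexp : IntervalIntegrable (fun t => exp (H t)) volume a b) :
    (b - a) * exp ((b - a)⁻¹ * ∫ t in a..b, H t) ≤ ∫ t in a..b, exp (H t) := by
  have hvol : volume (uIoc a b) = ENNReal.ofReal (b - a) := by
    rw [uIoc_of_le hab.le, Real.volume_Ioc]
  have hjensen := convexOn_exp.map_set_average_le continuous_exp.continuousOn isClosed_univ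
    (by simp [hvol, hab]) (by simp [hvol]) (Filter.Eventually.of_forall fun _ => mem_univ _)
    hH.def' hexp.def'
  rw [interval_average_eq, interval_average_eq, smul_eq_mul, smul_eq_mul,
    le_inv_mul_iff₀ (sub_pos.2 hab)] at hjensen
  exact hjensen

noncomputable def logRatio (c u : ℝ) : ℝ := log |u| - log (c + |u|)

section LogRatio

variable {c : ℝ}

theorem even_logRatio (c : ℝ) : Function.Even (logRatio c) := fun u => by
  simp only [logRatio, abs_neg]

theorem monotoneOn_logRatio (hc : 0 ≤ c) : MonotoneOn (logRatio c) (Ioi 0) := by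
  intro u (hu : 0 < u) v (hv : 0 < v) huv
  have hprod : log (u * (c + v)) ≤ log (v * (c + u)) :=
    log_le_log (by positivity) (by nlinarith)
  rw [log_mul hu.ne' (by positivity), log_mul hv.ne' (by positivity)] at hprod
  simp only [logRatio, abs_of_pos hu, abs_of_pos hv]
  linarith

theorem intervalIntegrable_logRatio (hc : 0 < c) (a b : ℝ) :
    IntervalIntegrable (logRatio c) volume a b := by
  have hlog_abs : IntervalIntegrable (fun u => log |u|) volume a b := by
    simpa only [log_abs] using intervalIntegrable_log'
  refine hlog_abs.sub (Continuous.intervalIntegrable ?_ a b)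
  exact (continuous_const.add continuous_abs).log fun u =>
    (add_pos_of_pos_of_nonneg hc (abs_nonneg u)).ne'

theorem exp_logRatio (hc : 0 ≤ c) {u : ℝ} (hu : u ≠ 0) :
    exp (logRatio c u) = |u| / (c + |u|) := by
  have hu' : 0 < |u| := abs_pos.2 hu
  rw [logRatio, exp_sub, exp_log hu', exp_log (by positivity)]

theorem integral_logRatio_zero_one (c : ℝ) :
    ∫ u in (0 : ℝ)..1, logRatio c u = c * log c - (c + 1) * log (c + 1) := by
  have hcongr : EqOn (logRatio c) (fun u => log u - log (u + c)) (uIcc 0 1) := by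
    intro u hu
    rw [uIcc_of_le zero_le_one] at hu
    simp only [logRatio, abs_of_nonneg hu.1, add_comm c]
  have hshift : IntervalIntegrable (fun u => log (u + c)) volume 0 1 := by
    simpa using intervalIntegrable_log'.comp_add_right c (a := c) (b := 1 + c)
  rw [integral_congr hcongr, integral_sub intervalIntegrable_log' hshift,
    intervalIntegral.integral_comp_add_right log, integral_log, integral_log, log_one, zero_add,
    add_comm 1 c]
  ring

theorem integral_logRatio_zero_one_nonpos (hc : 0 < c) :
    ∫ u in (0 : ℝ)..1, logRatio c u ≤ 0 := by
  rw [integral_logRatio_zero_one]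
  have hlog : log c ≤ log (c + 1) := log_le_log hc (by linarith)
  have hlog_nonneg : 0 ≤ log (c + 1) := log_nonneg (by linarith)
  nlinarith

theorem exp_integral_logRatio_zero_one (hc : 0 < c) :
    exp (∫ u in (0 : ℝ)..1, logRatio c u) = ((1 + 1 / c) ^ c * (c + 1))⁻¹ := by
  have hbase : 1 + 1 / c = (c + 1) / c := by field_simp
  rw [integral_logRatio_zero_one, hbase, div_rpow (by positivity) hc.le,
    ← exp_log (x := ((c + 1) ^ c / c ^ c * (c + 1))⁻¹) (by positivity)]
  congr 1
  rw [log_inv, log_mul (by positivity) (by positivity), log_div (by positivity) (by positivity),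
    log_rpow (by positivity), log_rpow hc]
  ring

theorem two_mul_integral_logRatio_le_integral_comp_sub (hc : 0 < c) {a : ℝ}
    (ha : a ∈ Icc (-1 : ℝ) 1) :
    2 * ∫ u in (0 : ℝ)..1, logRatio c u ≤ ∫ t in (-1 : ℝ)..1, logRatio c (t - a) := by
  rw [← integral_symm_eq_two_mul_of_even (even_logRatio c) (intervalIntegrable_logRatio hc)]
  exact integral_le_integral_comp_sub_of_even (even_logRatio c) (monotoneOn_logRatio hc.le)
    (intervalIntegrable_logRatio hc) (abs_le.2 ha)

end LogRatio

section WeightedProduct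

variable {ι : Type*} [Fintype ι] {c : ℝ} {x : ι → ℝ} {r : ι → ℕ}

theorem exp_sum_mul_logRatio (hc : 0 ≤ c) {t : ℝ} (ht : ∀ j, t ≠ x j) :
    exp (∑ j, r j * logRatio c (t - x j)) = ∏ j, (|t - x j| / (c + |t - x j|)) ^ r j := by
  rw [exp_sum]
  refine Finset.prod_congr rfl fun j _ => ?_
  rw [exp_nat_mul, exp_logRatio hc (sub_ne_zero.2 (ht j))]

theorem two_mul_exp_le_integral_prod (hc : 0 < c) (hx : ∀ j, x j ∈ Icc (-1 : ℝ) 1) {W : ℝ}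
    (hW : ∑ j, (r j : ℝ) ≤ W) :
    2 * exp (W * ∫ u in (0 : ℝ)..1, logRatio c u)
      ≤ ∫ t in (-1 : ℝ)..1, ∏ j, (|t - x j| / (c + |t - x j|)) ^ r j := by
  set A := ∫ u in (0 : ℝ)..1, logRatio c u
  set H : ℝ → ℝ := fun t => ∑ j, r j * logRatio c (t - x j)
  set P : ℝ → ℝ := fun t => ∏ j, (|t - x j| / (c + |t - x j|)) ^ r j
  have hint : ∀ j, IntervalIntegrable (fun t => logRatio c (t - x j)) volume (-1) 1 := fun j => by
    simpa using (intervalIntegrable_logRatio hc (-1 - x j) (1 - x j)).comp_sub_right (x j)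
  have hHint : IntervalIntegrable H volume (-1) 1 := by
    simpa only [Finset.sum_fn] using
      IntervalIntegrable.sum Finset.univ fun j _ => (hint j).const_mul (r j : ℝ)
  have hexpH : ∀ᵐ t, exp (H t) = P t := by
    have hnull : volume (⋃ j, {x j}) = 0 := measure_iUnion_null fun j => measure_singleton _
    filter_upwards [measure_eq_zero_iff_ae_notMem.1 hnull] with t ht
    exact exp_sum_mul_logRatio hc.le fun j htj => ht (mem_iUnion.2 ⟨j, htj⟩)
  have hPcont : Continuous P := by
    refine continuous_finsetProd _ fun j _ => ((continuous_sub_right _).abs.div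
      (continuous_const.add (continuous_sub_right _).abs) fun t => ?_).pow _
    exact (add_pos_of_pos_of_nonneg hc (abs_nonneg _)).ne'
  have hexpInt : IntervalIntegrable (fun t => exp (H t)) volume (-1) 1 :=
    (hPcont.intervalIntegrable _ _).congr_ae (ae_restrict_of_ae (hexpH.mono fun _ h => h.symm))
  have hHval : W * (2 * A) ≤ ∫ t in (-1 : ℝ)..1, H t :=
    calc W * (2 * A) ≤ ∑ j, (r j : ℝ) * (2 * A) := by
          rw [← Finset.sum_mul]
          exact mul_le_mul_of_nonpos_right hW (by linarith [integral_logRatio_zero_one_nonpos hc])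
      _ ≤ ∑ j, (r j : ℝ) * ∫ t in (-1 : ℝ)..1, logRatio c (t - x j) :=
          Finset.sum_le_sum fun j _ => mul_le_mul_of_nonneg_left
            (two_mul_integral_logRatio_le_integral_comp_sub hc (hx j)) (Nat.cast_nonneg _)
      _ = ∫ t in (-1 : ℝ)..1, H t := by
          rw [integral_finsetSum fun j _ => (hint j).const_mul (r j : ℝ)]
          simp only [intervalIntegral.integral_const_mul]
  calc 2 * exp (W * A) ≤ (1 - -1) * exp ((1 - -1)⁻¹ * ∫ t in (-1 : ℝ)..1, H t) := by
        norm_num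
        linarith
    _ ≤ ∫ t in (-1 : ℝ)..1, exp (H t) :=
        mul_exp_average_le_integral_exp (by norm_num) hHint hexpInt
    _ = ∫ t in (-1 : ℝ)..1, P t := integral_congr_ae (hexpH.mono fun _ h _ => h)

end WeightedProduct

theorem leastEven_le_succ (k : ℕ) : leastEven k ≤ k + 1 := by
  unfold leastEven
  omega

theorem sum_leastEven_le {ι : Type*} [Fintype ι] (k : ι → ℕ) :
    ∑ j, leastEven (k j) ≤ ∑ j, k j + Fintype.card ι :=
  calc ∑ j, leastEven (k j) ≤ ∑ j, (k j + 1) :=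
        Finset.sum_le_sum fun j _ => leastEven_le_succ (k j)
    _ = ∑ j, k j + Fintype.card ι := by simp [Finset.sum_add_distrib]

theorem key_integral_lower_bound_general (N : ℕ) (δ : ℝ) (hδ : 0 < δ)
    (n : ℕ) (hn : n ≤ N) (x : Fin n → ℝ) (hxI : ∀ j, x j ∈ Set.Icc (-1:ℝ) 1)
    (k : Fin n → ℕ) (hsum : ∑ j, k j = N) :
    let L : ℝ := 1 / 2
    (∫ t in (-1:ℝ)..1,
        ∏ j : Fin n, (L * |t - x j| / (δ + L * |t - x j|)) ^ leastEven (k j))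
      ≥ 2 * (((1 + 1 / (2 * δ)) ^ (2 * δ) * (2 * δ + 1)) ^ (2 * N))⁻¹ := by
  intro L
  have hc : 0 < 2 * δ := by positivity
  have hr : ∑ j, (leastEven (k j) : ℝ) ≤ (2 * N : ℕ) := by
    have := sum_leastEven_le k
    rw [hsum, Fintype.card_fin] at this
    exact_mod_cast this.trans (by omega)
  have hfactor (u : ℝ) : L * |u| / (δ + L * |u|) = |u| / (2 * δ + |u|) := by
    rw [div_eq_div_iff (by positivity) (by positivity)]
    ring
  simp only [hfactor, ge_iff_le]
  calc 2 * (((1 + 1 / (2 * δ)) ^ (2 * δ) * (2 * δ + 1)) ^ (2 * N))⁻¹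
      = 2 * exp ((2 * N : ℕ) * ∫ u in (0 : ℝ)..1, logRatio (2 * δ) u) := by
        rw [exp_nat_mul, exp_integral_logRatio_zero_one hc, inv_pow]
    _ ≤ _ := two_mul_exp_le_integral_prod hc hxI hr

theorem key_integral_lower_bound (N : ℕ) (hN : 1 ≤ N) (δ : ℝ) (hδ : 0 < δ)
    (n : ℕ) (hn : n ≤ N) (x : Fin n → ℝ) (hxI : ∀ j, x j ∈ Set.Icc (-1:ℝ) 1)
    (k : Fin n → ℕ) (hk : ∀ j, 1 ≤ k j) (hsum : ∑ j, k j = N) :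
    let L : ℝ := 1 / 2
    (∫ t in (-1:ℝ)..1,
        ∏ j : Fin n, (L * |t - x j| / (δ + L * |t - x j|)) ^ leastEven (k j))
      ≥ 2 * (((1 + 1 / (2 * δ)) ^ (2 * δ) * (2 * δ + 1)) ^ (2 * N))⁻¹ :=
  key_integral_lower_bound_general N δ hδ n hn x hxI k hsum
end

section
/- Define D(c) := ln(((c²−1+c)/(c²−1))^{(c²−1)/c} · ((c²−1+c)/c)) for c > 1. Then as c → 1⁺, writing Δ = c − 1, one has D(c) = −2Δ·ln Δ + O(Δ); in particular D(c)/(−2(c−1)ln(c−1)) → 1 as c → 1⁺. -/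
/-!
Since `c² - 1 = (c - 1)(c + 1)` and `(c² - 1)/c = 2(c - 1) - (c - 1)²/c`, writing `Δ = c - 1`,
`D(c) = -2Δ log Δ + Δ · (Δ log Δ / c) + F(c)`, where `F = decayRateSmoothPart` collects the terms without `log Δ`; `F` is
differentiable at `1` with `F(1) = 0`, so it is `O(Δ)`, and `Δ log Δ → 0`. Hence
`D(c) + 2Δ log Δ = O(Δ)`, and as `Δ = o(Δ log Δ)`, `D(c)` is asymptotically equivalent to
`-2Δ log Δ`.
-/

open Filter Asymptotics

open Real Topology

noncomputable def decayRate (c : ℝ) : ℝ :=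
  log (((c ^ 2 - 1 + c) / (c ^ 2 - 1)) ^ ((c ^ 2 - 1) / c) * ((c ^ 2 - 1 + c) / c))

noncomputable def decayRateSmoothPart (c : ℝ) : ℝ :=
  (c ^ 2 - 1) / c * log ((c ^ 2 - 1 + c) / (c + 1)) + log ((c ^ 2 - 1 + c) / c)

lemma decayRate_eq {c : ℝ} (hc : 1 < c) :
    decayRate c = -2 * (c - 1) * log (c - 1) + (c - 1) * ((c - 1) * log (c - 1) / c)
      + decayRateSmoothPart c := by
  have hc0 : 0 < c := by linarith
  have hΔ : 0 < c - 1 := by linarith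
  have hsq : c ^ 2 - 1 = (c - 1) * (c + 1) := by ring
  have hsq_pos : 0 < c ^ 2 - 1 := by rw [hsq]; positivity
  have hnum : 0 < c ^ 2 - 1 + c := by linarith
  rw [decayRate, decayRateSmoothPart, log_mul (by positivity) (by positivity),
    log_rpow (by positivity), log_div hnum.ne' hsq_pos.ne', log_div hnum.ne' hc0.ne',
    log_div hnum.ne' (by positivity : c + 1 ≠ 0), hsq,
    log_mul hΔ.ne' (by positivity)]
  field_simp
  ring

lemma differentiableAt_decayRateSmoothPart_one : DifferentiableAt ℝ decayRateSmoothPart 1 := by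
  unfold decayRateSmoothPart
  fun_prop (disch := norm_num)

lemma decayRateSmoothPart_one : decayRateSmoothPart 1 = 0 := by
  norm_num [decayRateSmoothPart]

lemma tendsto_sub_nhdsGT_zero (a : ℝ) : Tendsto (· - a) (𝓝[>] a) (𝓝[>] 0) := by
  have h := tendsto_map (f := (· - a)) (x := 𝓝[>] a)
  rwa [map_subRight_nhdsGT, sub_self] at h

lemma isLittleO_self_mul_log_nhdsGT_zero : (fun x : ℝ => x) =o[𝓝[>] 0] fun x => x * log x := by
  have h : (fun _ : ℝ => (1 : ℝ)) =o[𝓝[>] 0] log :=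
    (isLittleO_one_left_iff ℝ).2 (tendsto_abs_atBot_atTop.comp tendsto_log_nhdsGT_zero)
  simpa using (isBigO_refl (fun x : ℝ => x) _).mul_isLittleO h

lemma isBigO_decayRate_sub :
    (fun c => decayRate c - (-2 * (c - 1) * log (c - 1))) =O[𝓝[>] 1] (· - 1) := by
  have hsmooth : decayRateSmoothPart =O[𝓝[>] 1] (· - 1) := by
    simpa [decayRateSmoothPart_one] using
      differentiableAt_decayRateSmoothPart_one.isBigO_sub.mono nhdsWithin_le_nhds
  have hlog : Tendsto (fun c => (c - 1) * log (c - 1) / c) (𝓝[>] 1) (𝓝 0) := by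
    have h : Tendsto (fun c => (c - 1) * log (c - 1)) (𝓝[>] 1) (𝓝 0) := by
      simpa [Function.comp_def] using
        ((continuous_mul_log.tendsto 0).mono_left nhdsWithin_le_nhds).comp (tendsto_sub_nhdsGT_zero 1)
    simpa [Pi.div_def] using h.div (tendsto_id.mono_left nhdsWithin_le_nhds) one_ne_zero
  have hrest : (fun c => (c - 1) * ((c - 1) * log (c - 1) / c)) =O[𝓝[>] 1] (· - 1) := by
    simpa using (isBigO_refl (· - 1 : ℝ → ℝ) _).mul (hlog.isBigO_one ℝ)
  refine (hrest.add hsmooth).congr' ?_ EventuallyEq.rfl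
  filter_upwards [self_mem_nhdsWithin] with c hc
  rw [decayRate_eq hc]
  ring

lemma decayRate_isEquivalent :
    decayRate ~[𝓝[>] 1] fun c => -2 * (c - 1) * log (c - 1) := by
  have h : (· - 1 : ℝ → ℝ) =o[𝓝[>] 1] fun c => -2 * (c - 1) * log (c - 1) := by
    simpa [Function.comp_def, mul_assoc] using
      (isLittleO_self_mul_log_nhdsGT_zero.comp_tendsto (tendsto_sub_nhdsGT_zero 1)).const_mul_right
        (by norm_num : (-2 : ℝ) ≠ 0)
  exact (isBigO_decayRate_sub.trans_isLittleO h).isEquivalent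

lemma eventually_sub_one_mul_log_ne_zero :
    ∀ᶠ c in 𝓝[>] 1, -2 * (c - 1) * log (c - 1) ≠ 0 := by
  filter_upwards [Ioo_mem_nhdsGT (by norm_num : (1 : ℝ) < 2)] with c ⟨h1, h2⟩
  have : log (c - 1) < 0 := log_neg (by linarith) (by linarith)
  nlinarith

theorem decay_rate_asymptotics :
    let D : ℝ → ℝ := fun c =>
      Real.log (((c ^ 2 - 1 + c) / (c ^ 2 - 1)) ^ ((c ^ 2 - 1) / c)
        * ((c ^ 2 - 1 + c) / c))
    (fun c : ℝ => D c - (-2 * (c - 1) * Real.log (c - 1)))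
        =O[nhdsWithin 1 (Set.Ioi 1)] (fun c : ℝ => c - 1) ∧
      Tendsto (fun c : ℝ => D c / (-2 * (c - 1) * Real.log (c - 1)))
        (nhdsWithin 1 (Set.Ioi 1)) (nhds 1) :=
  ⟨isBigO_decayRate_sub,
    (isEquivalent_iff_tendsto_one eventually_sub_one_mul_log_ne_zero).1 decayRate_isEquivalent⟩
end
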